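/- Fix an integer m₂ ≥ 1, reals x_1,…,x_{m₂} > 0, and c > 0. For each h > 0 let Π_h be drawn from the Beta(cπ(h), c(1−π(h))) distribution and, conditionally on Π_h, let Δ_1^h,…,Δ_{m₂}^h be independent with P(Δ_i^h = k | Π_h) = [Γ(x_i+k)/(Γ(x_i)·k!)]·Π_h^k·(1−Π_h)^{x_i} for k ∈ ℕ. Then for all nonnegative integers k_1,…,k_{m₂} with Σ_{i=1}^{m₂} k_i ≥ 1, one has P(Δ_i^h = k_i for all i) = q·h + o(h) as h → 0+, where q = c·(∏_{i=1}^{m₂} Γ(x_i+k_i)/(Γ(x_i)·k_i!))·[Γ(Σ_i k_i)·Γ(Σ_i x_i + c)/Γ(Σ_i x_i + Σ_i k_i + c)]·r(t), which is strictly positive. -/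

import Mathlib

open scoped BigOperators
open Filter Topology Asymptotics

/-- The Beta function `B(a,b) = Γ(a)Γ(b)/Γ(a+b)`. -/
noncomputable def betaFn (a b : ℝ) : ℝ := Real.Gamma a * Real.Gamma b / Real.Gamma (a + b)

/-- The joint pmf of `(Δ_1,…,Δ_m)` where, conditionally on `Π ~ Beta(α,β)`, the `Δ_i`
are independent with `P(Δ_i = k | Π) = [Γ(x_i+k)/(Γ(x_i)k!)]·Π^k(1−Π)^{x_i}`:
`P(Δ = k) = (∏ Γ(x_i+k_i)/(Γ(x_i)k_i!)) · B(∑k+α, ∑x+β)/B(α,β)`. -/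
noncomputable def mbnbPmf (m : ℕ) (x : Fin m → ℝ) (α β : ℝ) (k : Fin m → ℕ) : ℝ :=
  (∏ i, Real.Gamma (x i + (k i : ℝ)) / (Real.Gamma (x i) * ((k i).factorial : ℝ))) *
    (betaFn ((∑ i, (k i : ℝ)) + α) ((∑ i, x i) + β) / betaFn α β)

/-- Expectation of `f(Δ_1,…,Δ_m)` under the above joint distribution. -/
noncomputable def mbnbExp (m : ℕ) (x : Fin m → ℝ) (α β : ℝ) (f : (Fin m → ℕ) → ℝ) : ℝ :=
  ∑' k : Fin m → ℕ, f k * mbnbPmf m x α β k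

/-- `π(h) = 1 − exp(−∫_t^{t+h} r(s) ds)`. -/
noncomputable def pih (r : ℝ → ℝ) (t h : ℝ) : ℝ :=
  1 - Real.exp (-(∫ s in t..(t + h), r s))

/-! Writing `a = cπ(h)`, the probability is `P · B(K + a, X + c - a) / B(a, c - a)` with
`K = ∑ kᵢ`, `X = ∑ xᵢ` and `P` the product of the negative binomial coefficients. Since
`a · B(a, c - a) = c · B(a + 1, c - a)` tends to `c · B(1, c) = 1` as `a → 0`, this is
`a · P · B(K, X + c) + o(a)`, and `π(h) = r(t) h + o(h)` by the fundamental theorem of calculus. -/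

lemma betaFn_pos {a b : ℝ} (ha : 0 < a) (hb : 0 < b) : 0 < betaFn a b := by
  have := Real.Gamma_pos_of_pos ha
  have := Real.Gamma_pos_of_pos hb
  have := Real.Gamma_pos_of_pos (add_pos ha hb)
  unfold betaFn
  positivity

/-- A junk value (Mathlib sets `Γ(0) = 0`). It makes the ratios `B(b + a, d - a) / B(a, c - a)`
vanish at `a = 0`, so their derivative there is the limit of the ratio divided by `a`. -/
lemma betaFn_zero_left (b : ℝ) : betaFn 0 b = 0 := by
  simp [betaFn, Real.Gamma_zero]

lemma add_mul_betaFn_add_one {a b : ℝ} (ha : a ≠ 0) (hab : a + b ≠ 0) :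
    (a + b) * betaFn (a + 1) b = a * betaFn a b := by
  rw [betaFn, betaFn, add_right_comm, Real.Gamma_add_one ha, Real.Gamma_add_one hab]
  field_simp

lemma mul_betaFn_one_left {c : ℝ} (hc : 0 < c) : c * betaFn 1 c = 1 := by
  rw [betaFn, add_comm, Real.Gamma_add_one hc.ne', Real.Gamma_one]
  field_simp [(Real.Gamma_pos_of_pos hc).ne']

lemma Real.continuousAt_Gamma_of_pos {s : ℝ} (hs : 0 < s) : ContinuousAt Real.Gamma s :=
  (Real.differentiableAt_Gamma fun m => ((neg_nonpos.mpr m.cast_nonneg).trans_lt hs).ne')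
    |>.continuousAt

lemma ContinuousAt.betaFn {f g : ℝ → ℝ} {y : ℝ} (hf : ContinuousAt f y) (hg : ContinuousAt g y)
    (hfy : 0 < f y) (hgy : 0 < g y) : ContinuousAt (fun z => betaFn (f z) (g z)) y := by
  have hΓ : ∀ {φ : ℝ → ℝ}, ContinuousAt φ y → 0 < φ y →
      ContinuousAt (fun z => Real.Gamma (φ z)) y := fun hφ hφy =>
    (Real.continuousAt_Gamma_of_pos hφy).comp hφ
  exact ((hΓ hf hfy).mul (hΓ hg hgy)).div (hΓ (hf.add hg) (add_pos hfy hgy))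
    (Real.Gamma_pos_of_pos (add_pos hfy hgy)).ne'

lemma hasDerivAt_betaFn_div_betaFn {b d c : ℝ} (hb : 0 < b) (hd : 0 < d) (hc : 0 < c) :
    HasDerivAt (fun a => betaFn (b + a) (d - a) / betaFn a (c - a)) (betaFn b d) 0 := by
  set G : ℝ → ℝ := fun a => betaFn (b + a) (d - a) / (c * betaFn (a + 1) (c - a))
  have hG : ContinuousAt G 0 := by
    refine (ContinuousAt.betaFn (by fun_prop) (by fun_prop) (by simpa using hb)
      (by simpa using hd)).div (continuousAt_const.mul (ContinuousAt.betaFn (by fun_prop)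
        (by fun_prop) (by norm_num) (by simpa using hc))) ?_
    simp [mul_betaFn_one_left hc]
  have hG0 : G 0 = betaFn b d := by
    simp [G, mul_betaFn_one_left hc]
  have hslope : slope (fun a => betaFn (b + a) (d - a) / betaFn a (c - a)) 0 =ᶠ[𝓝[≠] 0] G := by
    filter_upwards [self_mem_nhdsWithin] with a (ha : a ≠ 0)
    have hB := add_mul_betaFn_add_one ha (show a + (c - a) ≠ 0 by simpa using hc.ne')
    rw [add_sub_cancel] at hB
    simp only [slope_def_field, sub_zero, betaFn_zero_left, div_zero, div_div, mul_comm _ a]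
    rw [← hB]
  rw [hasDerivAt_iff_tendsto_slope, ← hG0]
  exact (hG.tendsto.mono_left nhdsWithin_le_nhds).congr' hslope.symm

lemma hasDerivAt_mbnbPmf {m : ℕ} (x : Fin m → ℝ) (k : Fin m → ℕ) {c : ℝ} (hc : 0 < c)
    (hxc : 0 < ∑ i, x i + c) (hk : 0 < ∑ i, k i) :
    HasDerivAt (fun a => mbnbPmf m x a (c - a) k)
      ((∏ i, Real.Gamma (x i + (k i : ℝ)) / (Real.Gamma (x i) * ((k i).factorial : ℝ))) *
        betaFn (∑ i, (k i : ℝ)) (∑ i, x i + c)) 0 := by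
  have hK : (0 : ℝ) < ∑ i, (k i : ℝ) := by exact_mod_cast hk
  have h := (hasDerivAt_betaFn_div_betaFn hK hxc hc).const_mul
    (∏ i, Real.Gamma (x i + (k i : ℝ)) / (Real.Gamma (x i) * ((k i).factorial : ℝ)))
  exact h.congr_of_eventuallyEq (.of_forall fun a => by simp only [mbnbPmf, add_sub_assoc])

lemma mbnbPmf_zero_left (m : ℕ) (x : Fin m → ℝ) (β : ℝ) (k : Fin m → ℕ) :
    mbnbPmf m x 0 β k = 0 := by
  rw [mbnbPmf, betaFn_zero_left, div_zero, mul_zero]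

lemma pih_zero (r : ℝ → ℝ) (t : ℝ) : pih r t 0 = 0 := by
  simp [pih]

lemma hasDerivAt_pih {r : ℝ → ℝ} (hr : Continuous r) (t : ℝ) :
    HasDerivAt (pih r t) (r t) 0 := by
  have hFTC : HasDerivAt (fun u => ∫ s in t..u, r s) (r t) (t + 0) := by
    simpa using intervalIntegral.integral_hasDerivAt_right (hr.intervalIntegrable t t)
      (hr.stronglyMeasurableAtFilter _ _) hr.continuousAt
  unfold pih
  simpa using ((hFTC.comp_const_add t 0).neg.exp).const_sub 1

theorem mbnb_transition_rate_general
    (r : ℝ → ℝ) (hr_cont : Continuous r) (hr_pos : ∀ s, 0 < r s)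
    (t c : ℝ) (hc : 0 < c) (m₂ : ℕ)
    (x : Fin m₂ → ℝ) (hx : ∀ i, 0 < x i)
    (k : Fin m₂ → ℕ) (hksum : 1 ≤ ∑ i, k i) :
    (fun h : ℝ => mbnbPmf m₂ x (c * pih r t h) (c * (1 - pih r t h)) k
        - c * (∏ i, Real.Gamma (x i + (k i : ℝ))
              / (Real.Gamma (x i) * ((k i).factorial : ℝ))) *
            (Real.Gamma (∑ i, (k i : ℝ)) * Real.Gamma ((∑ i, x i) + c)
              / Real.Gamma ((∑ i, x i) + (∑ i, (k i : ℝ)) + c)) * r t * h)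
      =o[𝓝[>] (0 : ℝ)] (fun h => h) ∧
    0 < c * (∏ i, Real.Gamma (x i + (k i : ℝ))
            / (Real.Gamma (x i) * ((k i).factorial : ℝ))) *
          (Real.Gamma (∑ i, (k i : ℝ)) * Real.Gamma ((∑ i, x i) + c)
            / Real.Gamma ((∑ i, x i) + (∑ i, (k i : ℝ)) + c)) * r t := by
  have hxc : 0 < ∑ i, x i + c :=
    add_pos_of_nonneg_of_pos (Finset.sum_nonneg fun i _ => (hx i).le) hc
  have hderiv := (hasDerivAt_mbnbPmf x k hc hxc hksum).comp_of_eq 0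
    ((hasDerivAt_pih hr_cont t).const_mul c) (by rw [pih_zero, mul_zero])
  have hlittle := hasDerivAt_iff_isLittleO_nhds_zero.mp hderiv
  refine ⟨?_, ?_⟩
  · refine (hlittle.mono nhdsWithin_le_nhds).congr (fun h => ?_) fun _ => rfl
    simp only [Function.comp_apply, zero_add, pih_zero, mul_zero, sub_zero, mbnbPmf_zero_left,
      smul_eq_mul, betaFn, ← mul_one_sub]
    ring_nf
  · have hK : (0 : ℝ) < ∑ i, (k i : ℝ) := by exact_mod_cast hksum
    have hP : 0 < ∏ i, Real.Gamma (x i + (k i : ℝ)) / (Real.Gamma (x i) * ((k i).factorial : ℝ)) :=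
      Finset.prod_pos fun i _ => by have := hx i; positivity
    have hL : 0 < Real.Gamma (∑ i, (k i : ℝ)) * Real.Gamma ((∑ i, x i) + c)
        / Real.Gamma ((∑ i, x i) + (∑ i, (k i : ℝ)) + c) := by
      simpa only [betaFn, add_left_comm, add_assoc] using betaFn_pos hK hxc
    exact mul_pos (mul_pos (mul_pos hc hP) hL) (hr_pos t)

/-- with `Π_h ~ Beta(cπ(h), c(1−π(h)))` and conditionally independent
negative binomials `Δ_i^h` (size parameters `x_i > 0`), for all `(k_1,…,k_{m₂})` with
`∑ k_i ≥ 1`: `P(Δ_i^h = k_i ∀ i) = q·h + o(h)` as `h → 0+`, where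
`q = c·(∏ Γ(x_i+k_i)/(Γ(x_i)k_i!))·[Γ(∑k)Γ(∑x+c)/Γ(∑x+∑k+c)]·r(t) > 0`. -/
theorem mbnb_transition_rate
    (r : ℝ → ℝ) (hr_cont : Continuous r) (hr_pos : ∀ s, 0 < r s)
    (t c : ℝ) (hc : 0 < c) (m₂ : ℕ) (hm : 1 ≤ m₂)
    (x : Fin m₂ → ℝ) (hx : ∀ i, 0 < x i)
    (k : Fin m₂ → ℕ) (hksum : 1 ≤ ∑ i, k i) :
    (fun h : ℝ => mbnbPmf m₂ x (c * pih r t h) (c * (1 - pih r t h)) k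
        - c * (∏ i, Real.Gamma (x i + (k i : ℝ))
              / (Real.Gamma (x i) * ((k i).factorial : ℝ))) *
            (Real.Gamma (∑ i, (k i : ℝ)) * Real.Gamma ((∑ i, x i) + c)
              / Real.Gamma ((∑ i, x i) + (∑ i, (k i : ℝ)) + c)) * r t * h)
      =o[𝓝[>] (0 : ℝ)] (fun h => h) ∧
    0 < c * (∏ i, Real.Gamma (x i + (k i : ℝ))
            / (Real.Gamma (x i) * ((k i).factorial : ℝ))) *
          (Real.Gamma (∑ i, (k i : ℝ)) * Real.Gamma ((∑ i, x i) + c)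
            / Real.Gamma ((∑ i, x i) + (∑ i, (k i : ℝ)) + c)) * r t :=
  mbnb_transition_rate_general r hr_cont hr_pos t c hc m₂ x hx k hksum
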